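/- Define the ℝ-linear map J: ℂ² → ℂ² by J(u₁,u₂) = (−conj(u₂), conj(u₁)); then J² = −identity, so J is a complex structure on ℝ⁴ ≅ ℂ² different from the standard one. A real 2-dimensional subspace V ⊆ ℂ² satisfies ω(u,v) = 0 and Im Ω(u,v) = 0 for all u,v ∈ V if and only if J(V) = V, i.e. V is a complex line with respect to J. (Thus special Lagrangian 2-folds in ℂ² are exactly holomorphic curves with respect to the alternative complex structure J.) -/

import Mathlib

open scoped BigOperators ComplexConjugate

noncomputable section

/-- The Kähler form on `ℂ²`. -/
def wC (u v : Fin 2 → ℂ) : ℝ := (∑ j, conj (u j) * v j).im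

/-- The alternative complex structure `J(u₁,u₂) = (−conj u₂, conj u₁)` on `ℂ² ≅ ℝ⁴`. -/
def J4 (u : Fin 2 → ℂ) : Fin 2 → ℂ := ![-(conj (u 1)), conj (u 0)]

lemma J4_J4' (u : Fin 2 → ℂ) : J4 (J4 u) = -u := by
  funext j; fin_cases j <;> simp [J4]

lemma J4_zero : J4 0 = 0 := by funext j; fin_cases j <;> simp [J4]

lemma J4_smul_add (a b : ℝ) (e f : Fin 2 → ℂ) :
    J4 (a • e + b • f) = a • J4 e + b • J4 f := by
  funext j; fin_cases j <;> simp [J4, Complex.real_smul, map_add, map_mul] <;> ring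

lemma omega_eq (u v : Fin 2 → ℂ) :
    u 0 * v 1 - u 1 * v 0 = ∑ j, conj (J4 u j) * v j := by
  simp [J4, Fin.sum_univ_two]; ring

lemma imH_zero (e : Fin 2 → ℂ) (a b c d : ℝ) :
    (∑ j, conj ((a • e + b • J4 e) j) * ((c • e + d • J4 e) j)).im = 0 := by
  simp [J4, Fin.sum_univ_two, Complex.add_im, Complex.mul_im, Complex.mul_re,
    Complex.real_smul]
  ring

lemma keyexp (e f : Fin 2 → ℂ) :
    (∑ j, conj (e j) * e j).re • f
      = (∑ j, conj (e j) * f j).re • e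
        + (∑ j, conj (e j) * f j).im • (fun j => Complex.I * e j)
        + (e 0 * f 1 - e 1 * f 0).re • J4 e
        + (e 0 * f 1 - e 1 * f 0).im • (fun j => Complex.I * J4 e j) := by
  funext j
  simp only [Pi.add_apply, Pi.smul_apply]
  fin_cases j <;>
    · simp [J4, Fin.sum_univ_two, Complex.ext_iff, Complex.add_re, Complex.add_im,
        Complex.mul_re, Complex.mul_im, Complex.real_smul]
      constructor <;> ring

lemma He_pos (e : Fin 2 → ℂ) (he : e ≠ 0) : 0 < (∑ j, conj (e j) * e j).re := by
  have hre : (∑ j, conj (e j) * e j).re = Complex.normSq (e 0) + Complex.normSq (e 1) := by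
    simp [Fin.sum_univ_two, Complex.normSq_apply, Complex.mul_re]
  rw [hre]
  have h01 : e 0 ≠ 0 ∨ e 1 ≠ 0 := by
    by_contra h
    push_neg at h
    exact he (funext fun j => by fin_cases j <;> simp [h.1, h.2])
  rcases h01 with h | h
  · have := Complex.normSq_pos.mpr h
    have := Complex.normSq_nonneg (e 1)
    linarith
  · have := Complex.normSq_pos.mpr h
    have := Complex.normSq_nonneg (e 0)
    linarith

lemma J4_indep (e : Fin 2 → ℂ) (he : e ≠ 0) : LinearIndependent ℝ ![e, J4 e] := by
  rw [linearIndependent_fin2]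
  constructor
  · simp only [Matrix.cons_val_one, Matrix.head_cons, Matrix.cons_val_zero]
    intro h
    apply he
    have := J4_J4' e
    rw [h, J4_zero] at this
    simpa using (neg_eq_zero.mp this.symm)
  · intro a hae
    simp only [Matrix.cons_val_one, Matrix.head_cons, Matrix.cons_val_zero] at hae
    apply he
    have h0 : a • J4 e 0 = e 0 := by have := congrFun hae 0; simpa using this
    have h1 : a • J4 e 1 = e 1 := by have := congrFun hae 1; simpa using this
    simp only [J4, Matrix.cons_val_zero, Matrix.cons_val_one, Matrix.head_cons,
      Complex.real_smul] at h0 h1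
    -- h0 : a * (-(conj (e 1))) = e 0,  h1 : a * conj (e 0) = e 1
    have he0 : (1 + (a:ℂ) * a) * e 0 = 0 := by
      have := congrArg (fun z => (a:ℂ) * conj z) h1
      simp only [map_mul, Complex.conj_conj, Complex.conj_ofReal] at this
      -- this : a * (a * conj (conj (e 0))) = a * conj (e 1)
      linear_combination this - h0
    have ha0 : (1 + (a:ℂ) * a) ≠ 0 := by
      intro h
      have : (1 + a * a : ℝ) = 0 := by exact_mod_cast (by push_cast; linear_combination h : ((1 + a*a : ℝ) : ℂ) = 0)
      nlinarith
    have he00 : e 0 = 0 := by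
      rcases mul_eq_zero.mp he0 with h | h
      · exact absurd h ha0
      · exact h
    have he11 : e 1 = 0 := by rw [← h1, he00]; simp
    exact funext fun j => by fin_cases j <;> simp [he00, he11]

lemma J4_mem (V : Submodule ℝ (Fin 2 → ℂ)) (hV : Module.finrank ℝ V = 2)
    (h1 : ∀ u ∈ V, ∀ v ∈ V, wC u v = 0)
    (h2 : ∀ u ∈ V, ∀ v ∈ V, (u 0 * v 1 - u 1 * v 0).im = 0)
    (e : Fin 2 → ℂ) (he : e ∈ V) : J4 e ∈ V := by
  by_cases h0 : e = 0
  · rw [h0, J4_zero]; exact V.zero_mem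
  -- find f ∈ V not in span of e
  have hnotle : ¬ (V : Set (Fin 2 → ℂ)) ⊆ (Submodule.span ℝ {e} : Submodule ℝ (Fin 2 → ℂ)) := by
    intro hsub
    have hle : V ≤ Submodule.span ℝ {e} := hsub
    have := Submodule.finrank_mono hle
    rw [hV, finrank_span_singleton h0] at this
    omega
  obtain ⟨f, hfV, hfn⟩ := Set.not_subset.mp hnotle
  have him1 : (∑ j, conj (e j) * f j).im = 0 := h1 e he f hfV
  have him2 : (e 0 * f 1 - e 1 * f 0).im = 0 := h2 e he f hfV
  have hkey := keyexp e f
  rw [him1, him2, zero_smul, zero_smul, add_zero, add_zero] at hkey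
  set A : ℝ := (∑ j, conj (e j) * e j).re with hA
  set r : ℝ := (∑ j, conj (e j) * f j).re with hr
  set s : ℝ := (e 0 * f 1 - e 1 * f 0).re with hs
  have hApos : 0 < A := He_pos e h0
  by_cases hs0 : s = 0
  · exfalso
    apply hfn
    rw [hs0, zero_smul, add_zero] at hkey
    have : f = (A⁻¹ * r) • e := by
      have := congrArg (fun x => A⁻¹ • x) hkey
      simpa [smul_smul, inv_mul_cancel₀ hApos.ne'] using this
    exact Submodule.mem_span_singleton.mpr ⟨A⁻¹ * r, this.symm⟩
  · have hJe : J4 e = s⁻¹ • (A • f - r • e) := by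
      have hs' : s • J4 e = A • f - r • e := by
        rw [hkey]; abel
      rw [← hs', smul_smul, inv_mul_cancel₀ hs0, one_smul]
    rw [hJe]
    exact V.smul_mem _ (V.sub_mem (V.smul_mem _ hfV) (V.smul_mem _ he))

/-- `J² = −1`, so `J` is a complex structure on `ℝ⁴ ≅ ℂ²`; and a real
`2`-dimensional subspace `V ⊆ ℂ²` satisfies `ω|_V ≡ 0` and `Im Ω|_V ≡ 0`
(where `Ω(u,v) = u₁v₂ − u₂v₁`) if and only if `J(V) = V`, i.e. `V` is a complex
line for `J`.  Thus special Lagrangian `2`-folds in `ℂ²` are exactly the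
`J`-holomorphic curves. -/
theorem stmt4 :
    (∀ u : Fin 2 → ℂ, J4 (J4 u) = -u) ∧
    (∀ V : Submodule ℝ (Fin 2 → ℂ), Module.finrank ℝ V = 2 →
      (((∀ u ∈ V, ∀ v ∈ V, wC u v = 0) ∧
          (∀ u ∈ V, ∀ v ∈ V, (u 0 * v 1 - u 1 * v 0).im = 0))
        ↔ J4 '' (V : Set (Fin 2 → ℂ)) = (V : Set (Fin 2 → ℂ)))) := by
  refine ⟨J4_J4', fun V hV => ⟨fun ⟨h1, h2⟩ => ?_, fun hJ => ?_⟩⟩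
  · -- forward direction
    apply Set.Subset.antisymm
    · rintro _ ⟨u, hu, rfl⟩
      exact J4_mem V hV h1 h2 u hu
    · intro v hv
      have h1' : J4 v ∈ V := J4_mem V hV h1 h2 v hv
      have h2' : J4 (J4 v) ∈ V := J4_mem V hV h1 h2 _ h1'
      refine ⟨-(J4 v), ?_, ?_⟩
      · exact V.neg_mem h1'
      · have : J4 (-(J4 v)) = -(J4 (J4 v)) := by
          funext j; fin_cases j <;> simp [J4]
        rw [this, J4_J4', neg_neg]
  · -- reverse direction
    have hstab : ∀ u ∈ V, J4 u ∈ V := fun u hu => by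
      have : J4 u ∈ J4 '' (V : Set (Fin 2 → ℂ)) := ⟨u, hu, rfl⟩
      rwa [hJ] at this
    have hVbot : V ≠ ⊥ := by
      intro h
      rw [h] at hV
      simp at hV
    obtain ⟨e, heV, he0⟩ := Submodule.exists_mem_ne_zero_of_ne_bot hVbot
    -- V = span {e, J4 e}
    have hle : Submodule.span ℝ {e, J4 e} ≤ V := by
      rw [Submodule.span_le]
      rintro x hx
      rcases hx with rfl | hx
      · exact heV
      · rw [Set.mem_singleton_iff] at hx
        rw [hx]
        exact hstab e heV
    have hspan : Submodule.span ℝ {e, J4 e} = V := by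
      apply Submodule.eq_of_le_of_finrank_le hle
      rw [hV]
      have hrange : Set.range ![e, J4 e] = {e, J4 e} := Matrix.range_cons_cons_empty e (J4 e) _
      have : Module.finrank ℝ (Submodule.span ℝ (Set.range ![e, J4 e])) = 2 := by
        rw [finrank_span_eq_card (J4_indep e he0)]
        simp
      rw [hrange] at this
      exact this.ge
    constructor
    · intro u hu v hv
      obtain ⟨a, b, hab⟩ := Submodule.mem_span_pair.mp (hspan ▸ hu : u ∈ Submodule.span ℝ {e, J4 e})
      obtain ⟨c, d, hcd⟩ := Submodule.mem_span_pair.mp (hspan ▸ hv : v ∈ Submodule.span ℝ {e, J4 e})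
      rw [wC, ← hab, ← hcd]
      exact imH_zero e a b c d
    · intro u hu v hv
      obtain ⟨a, b, hab⟩ := Submodule.mem_span_pair.mp (hspan ▸ hu : u ∈ Submodule.span ℝ {e, J4 e})
      obtain ⟨c, d, hcd⟩ := Submodule.mem_span_pair.mp (hspan ▸ hv : v ∈ Submodule.span ℝ {e, J4 e})
      rw [omega_eq]
      have hJu : J4 u = (-b) • e + a • J4 e := by
        rw [← hab, J4_smul_add, J4_J4']
        rw [smul_neg, ← neg_smul]
        abel
      rw [hJu, ← hcd]
      exact imH_zero e (-b) a c d
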